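/- Let α ∈ R_g with F_α = F∘α, and let w : [0,1) → ℝ be locally Lipschitz (Lipschitz on [0,a] for every a < 1) with w(0) = 0. Fix p ≥ 2 and assume ∫₀¹ |w|^p F_α |α'|_g dt < ∞. Then λ_{1,p}(α) ≤ (∫₀¹ |w'|^p F_α |α'|_g^{1−p} dt) / (∫₀¹ |w|^p F_α |α'|_g dt). -/

import Mathlib

open Set MeasureTheory Filter Topology

noncomputable section

/-- The closed quarter plane `P`. -/
def Pset : Set (ℝ × ℝ) := {z | 0 ≤ z.1 ∧ 0 ≤ z.2}

/-- The interior `P°` of the quarter plane. -/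
def Pint : Set (ℝ × ℝ) := {z | 0 < z.1 ∧ 0 < z.2}

/-- The boundary `∂P` of the quarter plane. -/
def Pbdry : Set (ℝ × ℝ) := {z | (0 ≤ z.1 ∧ 0 ≤ z.2) ∧ (z.1 = 0 ∨ z.2 = 0)}

/-- `F(x,y) = c_n x^(n-1) y^(n-1)`. -/
def Fvol (n : ℕ) (cn : ℝ) (z : ℝ × ℝ) : ℝ := cn * z.1 ^ (n - 1) * z.2 ^ (n - 1)

/-- Euclidean speed of a curve at `t`, computed with derivatives within `s`. -/
def gSpeedOn (s : Set ℝ) (α : ℝ → ℝ × ℝ) (t : ℝ) : ℝ :=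
  Real.sqrt ((derivWithin (fun u => (α u).1) s t) ^ 2 + (derivWithin (fun u => (α u).2) s t) ^ 2)

/-- Euclidean speed of a curve defined on `[0,1]`. -/
def gSpeed (α : ℝ → ℝ × ℝ) : ℝ → ℝ := gSpeedOn (Icc 0 1) α

/-- Euclidean length `L_g` of a curve on `[0,1]`. -/
def Lg (α : ℝ → ℝ × ℝ) : ℝ := ∫ t in (0:ℝ)..1, gSpeed α t

/-- The `h`-speed `|γ'|_h = F(γ) |γ'|_g`, with derivatives within `s`. -/
def hSpeedOn (n : ℕ) (cn : ℝ) (s : Set ℝ) (α : ℝ → ℝ × ℝ) (t : ℝ) : ℝ :=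
  Fvol n cn (α t) * gSpeedOn s α t

/-- The `h`-speed for curves defined on `[0,1)`. -/
def hSpeed (n : ℕ) (cn : ℝ) (α : ℝ → ℝ × ℝ) : ℝ → ℝ := hSpeedOn n cn (Ico 0 1) α

/-- The `h`-length `L_h` of a curve on `[0,1)`. -/
def Lh (n : ℕ) (cn : ℝ) (α : ℝ → ℝ × ℝ) : ℝ := ∫ t in (0:ℝ)..1, hSpeed n cn α t

/-- Numerator integrand of the `g`-Rayleigh quotient:
`|w'(t)|^p F(α t) |α'(t)|_g^(1-p)`. -/
def numG (n : ℕ) (cn p : ℝ) (s : Set ℝ) (α : ℝ → ℝ × ℝ) (w : ℝ → ℝ) (t : ℝ) : ℝ :=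
  |derivWithin w (Icc 0 1) t| ^ p * Fvol n cn (α t) * gSpeedOn s α t ^ (1 - p)

/-- Denominator integrand of the `g`-Rayleigh quotient:
`|w(t)|^p F(α t) |α'(t)|_g`. -/
def denG (n : ℕ) (cn p : ℝ) (s : Set ℝ) (α : ℝ → ℝ × ℝ) (w : ℝ → ℝ) (t : ℝ) : ℝ :=
  |w t| ^ p * Fvol n cn (α t) * gSpeedOn s α t

/-- First Dirichlet eigenvalue of the `p`-Laplacian along a curve, `g`-form:
infimum of the Rayleigh quotient over Lipschitz test functions on `[0,1]`
vanishing at `0` (with admissible, i.e. integrable with positive denominator,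
Rayleigh quotients). -/
def lambdaGOn (n : ℕ) (cn p : ℝ) (s : Set ℝ) (α : ℝ → ℝ × ℝ) : ℝ :=
  sInf {q | ∃ w : ℝ → ℝ, (∃ K, LipschitzOnWith K w (Icc 0 1)) ∧ w 0 = 0 ∧
    IntervalIntegrable (numG n cn p s α w) volume 0 1 ∧
    IntervalIntegrable (denG n cn p s α w) volume 0 1 ∧
    (0 < ∫ t in (0:ℝ)..1, denG n cn p s α w t) ∧
    q = (∫ t in (0:ℝ)..1, numG n cn p s α w t) / (∫ t in (0:ℝ)..1, denG n cn p s α w t)}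

/-- `λ_{1,p}` in the `g`-form for curves on `[0,1]`. -/
def lambdaG (n : ℕ) (cn p : ℝ) (α : ℝ → ℝ × ℝ) : ℝ := lambdaGOn n cn p (Icc 0 1) α

/-- Numerator integrand of the `h`-Rayleigh quotient on `[c,d]`:
`|w'(t)|^p F(γ t)^p |γ'(t)|_h^(1-p)`. -/
def numH (n : ℕ) (cn p c d : ℝ) (s : Set ℝ) (γ : ℝ → ℝ × ℝ) (w : ℝ → ℝ) (t : ℝ) : ℝ :=
  |derivWithin w (Icc c d) t| ^ p * Fvol n cn (γ t) ^ p * hSpeedOn n cn s γ t ^ (1 - p)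

/-- Denominator integrand of the `h`-Rayleigh quotient: `|w(t)|^p |γ'(t)|_h`. -/
def denH (n : ℕ) (cn p : ℝ) (s : Set ℝ) (γ : ℝ → ℝ × ℝ) (w : ℝ → ℝ) (t : ℝ) : ℝ :=
  |w t| ^ p * hSpeedOn n cn s γ t

/-- `λ_{1,p}` in the `h`-form for a curve on `[c,d)`, with test functions
Lipschitz on `[c,d]` vanishing at `c`. -/
def lambdaHOn (n : ℕ) (cn p c d : ℝ) (s : Set ℝ) (γ : ℝ → ℝ × ℝ) : ℝ :=
  sInf {q | ∃ w : ℝ → ℝ, (∃ K, LipschitzOnWith K w (Icc c d)) ∧ w c = 0 ∧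
    IntervalIntegrable (numH n cn p c d s γ w) volume c d ∧
    IntervalIntegrable (denH n cn p s γ w) volume c d ∧
    (0 < ∫ t in c..d, denH n cn p s γ w t) ∧
    q = (∫ t in c..d, numH n cn p c d s γ w t) / (∫ t in c..d, denH n cn p s γ w t)}

/-- `λ_{1,p}` in the `h`-form for curves on `[0,1)`. -/
def lambdaH (n : ℕ) (cn p : ℝ) (γ : ℝ → ℝ × ℝ) : ℝ :=
  lambdaHOn n cn p 0 1 (Ico 0 1) γ

/-- The class `𝒞` of `C¹` curves from `(x₀,y₀)` to the boundary, with constant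
speed, interior image on `[0,1)`, endpoint away from the origin, and meeting the
boundary orthogonally. -/
def MemC (x0 y0 : ℝ) (α : ℝ → ℝ × ℝ) : Prop :=
  ContDiffOn ℝ 1 α (Icc 0 1) ∧
  α 0 = (x0, y0) ∧
  (∀ t ∈ Ico (0:ℝ) 1, α t ∈ Pint) ∧
  α 1 ∈ Pbdry ∧ α 1 ≠ ((0 : ℝ), (0 : ℝ)) ∧
  (∀ t ∈ Icc (0:ℝ) 1, gSpeed α t = Lg α) ∧
  ((α 1).1 = 0 → derivWithin (fun u => (α u).2) (Icc 0 1) 1 = 0) ∧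
  ((α 1).2 = 0 → derivWithin (fun u => (α u).1) (Icc 0 1) 1 = 0)

/-- The Simons cone curve `σ(t) = (1-t)·(R,R)`. -/
def simonsCurve (R : ℝ) : ℝ → ℝ × ℝ := fun t => ((1 - t) * R, (1 - t) * R)

/-- The class `R_h`: locally Lipschitz curves on `[0,1)` with image in `P°`,
starting at `(x₀,y₀)`, with essentially bounded `h`-speed, reaching the collapsed
boundary point as `t → 1` (i.e. `x(γ t)·y(γ t) → 0`). -/
def MemRh (n : ℕ) (cn x0 y0 : ℝ) (γ : ℝ → ℝ × ℝ) : Prop :=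
  γ 0 = (x0, y0) ∧
  (∀ t ∈ Ico (0:ℝ) 1, γ t ∈ Pint) ∧
  (∀ a ∈ Ico (0:ℝ) 1, ∃ K, LipschitzOnWith K γ (Icc 0 a)) ∧
  (∃ M : ℝ, ∀ᵐ t ∂(volume : Measure ℝ), t ∈ Ico (0:ℝ) 1 → hSpeed n cn γ t ≤ M) ∧
  Tendsto (fun t => (γ t).1 * (γ t).2) (𝓝[<] (1:ℝ)) (𝓝 0)

/-- The class `R_h^+`: continuous curves on `[0,1]` into `P` ending on `∂P`
whose restriction to `[0,1)` belongs to `R_h`. -/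
def MemRhPlus (n : ℕ) (cn x0 y0 : ℝ) (α : ℝ → ℝ × ℝ) : Prop :=
  ContinuousOn α (Icc 0 1) ∧ (∀ t ∈ Icc (0:ℝ) 1, α t ∈ Pset) ∧ α 1 ∈ Pbdry ∧
  MemRh n cn x0 y0 α

/-- The class `R_g`: Lipschitz curves on `[0,1]` from `(x₀,y₀)` to `∂P` with
interior image on `[0,1)`. -/
def MemRg (x0 y0 : ℝ) (α : ℝ → ℝ × ℝ) : Prop :=
  (∃ K, LipschitzOnWith K α (Icc 0 1)) ∧ α 0 = (x0, y0) ∧ α 1 ∈ Pbdry ∧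
  ∀ t ∈ Ico (0:ℝ) 1, α t ∈ Pint

/-- The coordinate `u(x,y) = (x² - y²)/2`. -/
def ucoord (z : ℝ × ℝ) : ℝ := (z.1 ^ 2 - z.2 ^ 2) / 2

/-- The coordinate `v(x,y) = xy`. -/
def vcoord (z : ℝ × ℝ) : ℝ := z.1 * z.2

/-- The coordinate `r = √(u² + v²)`. -/
def rcoord (z : ℝ × ℝ) : ℝ := Real.sqrt (ucoord z ^ 2 + vcoord z ^ 2)

/-- The class `R_g^*`: simple curves in `R_g` with a.e. constant speed,
`u(α(1)) > 0`, and `v(α(t)) ≥ c(1-t)` for some `c > 0`. -/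
def MemRgStar (x0 y0 : ℝ) (α : ℝ → ℝ × ℝ) : Prop :=
  MemRg x0 y0 α ∧ InjOn α (Icc 0 1) ∧
  (∀ᵐ t ∂(volume : Measure ℝ), t ∈ Icc (0:ℝ) 1 → gSpeed α t = Lg α) ∧
  0 < ucoord (α 1) ∧
  ∃ c > (0:ℝ), ∀ t ∈ Icc (0:ℝ) 1, c * (1 - t) ≤ vcoord (α t)

/-! Truncating `w` at `a < 1`, `w_a(t) = w (min t a)`, gives a test function that is Lipschitz
on all of `[0,1]`. Its Rayleigh numerator is at most that of `w`, because `w_a' = 0` beyond `a`.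
Its denominator is at least `∫₀ᵃ |w|^p F_α |α'|_g`, and it is finite because `w_a`, `F_α` and
`|α'|_g` are bounded. Hence `λ_{1,p}(α) ∫₀ᵃ |w|^p F_α |α'|_g ≤ ∫₀¹ |w'|^p F_α |α'|_g^{1-p}`
for every `a < 1`, and the claim follows as `a → 1` by continuity of the measure
`|w|^p F_α |α'|_g dt`. -/

open scoped ENNReal NNReal

lemma ae_restrict_Icc_mem_Ioo {μ : Measure ℝ} [NullSingletonClass μ] (a b : ℝ) :
    ∀ᵐ t ∂μ.restrict (Icc a b), t ∈ Ioo a b := by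
  rw [← Measure.restrict_congr_set Ioo_ae_eq_Icc]
  exact ae_restrict_mem measurableSet_Ioo

lemma aemeasurable_derivWithin_Icc {μ : Measure ℝ} [NullSingletonClass μ] (f : ℝ → ℝ)
    (a b : ℝ) : AEMeasurable (derivWithin f (Icc a b)) (μ.restrict (Icc a b)) := by
  refine (measurable_deriv f).aemeasurable.congr ?_
  filter_upwards [ae_restrict_Icc_mem_Ioo a b] with t ht
  exact (derivWithin_of_mem_nhds (Icc_mem_nhds ht.1 ht.2)).symm

lemma setLIntegral_Ioc_ofReal_eq {f : ℝ → ℝ} {a b : ℝ} (hab : a ≤ b)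
    (hf : IntervalIntegrable f volume a b) (hf0 : ∀ t ∈ Icc a b, 0 ≤ f t) :
    ∫⁻ t in Ioc a b, ENNReal.ofReal (f t) = ENNReal.ofReal (∫ t in a..b, f t) := by
  rw [intervalIntegral.integral_of_le hab]
  refine (ofReal_integral_eq_lintegral_ofReal ((intervalIntegrable_iff_integrableOn_Ioc_of_le
    hab).1 hf) ?_).symm
  filter_upwards [ae_restrict_mem measurableSet_Ioc] with t ht
  exact hf0 t (Ioc_subset_Icc_self ht)

lemma setLIntegral_Ioc_eq_iSup {μ : Measure ℝ} [NullSingletonClass μ] (f : ℝ → ℝ≥0∞) {a b : ℝ}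
    (hab : a < b) :
    ∫⁻ t in Ioc a b, f t ∂μ = ⨆ c : Ioo a b, ∫⁻ t in Ioc a c, f t ∂μ := by
  refine le_antisymm ?_ (iSup_le fun c => lintegral_mono_set (Ioc_subset_Ioc_right c.2.2.le))
  obtain ⟨u, hu_mono, hu_mem, hu_lim⟩ := exists_seq_strictMono_tendsto' hab
  have hunion : ⋃ k, Ioc a (u k) = Ioo a b := by
    refine Subset.antisymm (iUnion_subset fun k t ht => ⟨ht.1, ht.2.trans_lt (hu_mem k).2⟩) ?_
    intro t ht
    obtain ⟨k, hk⟩ := (hu_lim.eventually (lt_mem_nhds ht.2)).exists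
    exact mem_iUnion.2 ⟨k, ht.1, hk.le⟩
  calc ∫⁻ t in Ioc a b, f t ∂μ = μ.withDensity f (⋃ k, Ioc a (u k)) := by
        rw [hunion, withDensity_apply _ measurableSet_Ioo, setLIntegral_congr Ioo_ae_eq_Ioc]
    _ = ⨆ k, ∫⁻ t in Ioc a (u k), f t ∂μ := by
        have hmono : Monotone fun k => Ioc a (u k) :=
          fun i j hij => Ioc_subset_Ioc_right (hu_mono.monotone hij)
        rw [hmono.measure_iUnion]
        simp only [withDensity_apply _ measurableSet_Ioc]
    _ ≤ ⨆ c : Ioo a b, ∫⁻ t in Ioc a c, f t ∂μ :=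
        iSup_le fun k => le_iSup (fun c : Ioo a b => ∫⁻ t in Ioc a c, f t ∂μ) ⟨u k, hu_mem k⟩

lemma LipschitzOnWith.comp_min_const {K : ℝ≥0} {w : ℝ → ℝ} {a : ℝ} (ha : 0 ≤ a)
    (hw : LipschitzOnWith K w (Icc 0 a)) : LipschitzOnWith K (fun u => w (min u a)) (Ici 0) := by
  simpa [Function.comp_def] using hw.comp (LipschitzWith.id.min_const a).lipschitzOnWith
    (fun u (hu : u ∈ Ici 0) => ⟨le_min hu ha, min_le_right u a⟩)

lemma Fvol_nonneg {n : ℕ} {cn : ℝ} (hcn : 0 ≤ cn) {z : ℝ × ℝ} (hz : z ∈ Pset) :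
    0 ≤ Fvol n cn z :=
  mul_nonneg (mul_nonneg hcn (pow_nonneg hz.1 _)) (pow_nonneg hz.2 _)

lemma continuous_Fvol (n : ℕ) (cn : ℝ) : Continuous (Fvol n cn) := by
  unfold Fvol
  fun_prop

lemma MemRg.mapsTo_Pset {x0 y0 : ℝ} {α : ℝ → ℝ × ℝ} (hα : MemRg x0 y0 α) :
    MapsTo α (Icc 0 1) Pset := by
  intro t ht
  rcases ht.2.lt_or_eq with ht1 | rfl
  · exact ⟨(hα.2.2.2 t ⟨ht.1, ht1⟩).1.le, (hα.2.2.2 t ⟨ht.1, ht1⟩).2.le⟩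
  · exact hα.2.2.1.1

lemma aemeasurable_gSpeedOn_Icc {μ : Measure ℝ} [NullSingletonClass μ] (α : ℝ → ℝ × ℝ)
    (a b : ℝ) : AEMeasurable (gSpeedOn (Icc a b) α) (μ.restrict (Icc a b)) :=
  (((aemeasurable_derivWithin_Icc _ a b).pow_const 2).add
    ((aemeasurable_derivWithin_Icc _ a b).pow_const 2)).sqrt

lemma gSpeedOn_nonneg (s : Set ℝ) (α : ℝ → ℝ × ℝ) (t : ℝ) : 0 ≤ gSpeedOn s α t :=
  Real.sqrt_nonneg _

lemma gSpeedOn_Icc_le {α : ℝ → ℝ × ℝ} {a b t : ℝ} {K : ℝ≥0}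
    (hα : LipschitzOnWith K α (Icc a b)) (ht : t ∈ Ioo a b) :
    gSpeedOn (Icc a b) α t ≤ 2 * K := by
  have hnhds : Icc a b ∈ 𝓝 t := Icc_mem_nhds ht.1 ht.2
  have h1 : |deriv (fun u => (α u).1) t| ≤ K :=
    norm_deriv_le_of_lipschitzOn hnhds
      (by simpa using LipschitzWith.prod_fst.comp_lipschitzOnWith hα)
  have h2 : |deriv (fun u => (α u).2) t| ≤ K :=
    norm_deriv_le_of_lipschitzOn hnhds
      (by simpa using LipschitzWith.prod_snd.comp_lipschitzOnWith hα)
  rw [gSpeedOn, derivWithin_of_mem_nhds hnhds, derivWithin_of_mem_nhds hnhds,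
    Real.sqrt_le_iff]
  refine ⟨by positivity, ?_⟩
  nlinarith [sq_abs (deriv (fun u => (α u).1) t), sq_abs (deriv (fun u => (α u).2) t),
    abs_nonneg (deriv (fun u => (α u).1) t), abs_nonneg (deriv (fun u => (α u).2) t)]

section Rayleigh

variable {n : ℕ} {cn p : ℝ} {s : Set ℝ} {α : ℝ → ℝ × ℝ} {v : ℝ → ℝ}

lemma numG_nonneg {t : ℝ} (hF : 0 ≤ Fvol n cn (α t)) : 0 ≤ numG n cn p s α v t :=
  mul_nonneg (mul_nonneg (Real.rpow_nonneg (abs_nonneg _) _) hF)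
    (Real.rpow_nonneg (gSpeedOn_nonneg s α t) _)

lemma denG_nonneg {t : ℝ} (hF : 0 ≤ Fvol n cn (α t)) : 0 ≤ denG n cn p s α v t :=
  mul_nonneg (mul_nonneg (Real.rpow_nonneg (abs_nonneg _) _) hF) (gSpeedOn_nonneg s α t)

lemma aemeasurable_numG (hα : ContinuousOn α (Icc 0 1)) (v : ℝ → ℝ) :
    AEMeasurable (numG n cn p (Icc 0 1) α v) (volume.restrict (Icc 0 1)) :=
  (((aemeasurable_derivWithin_Icc v 0 1).abs.pow_const p).mul
    (((continuous_Fvol n cn).comp_continuousOn hα).aemeasurable measurableSet_Icc)).mul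
    ((aemeasurable_gSpeedOn_Icc α 0 1).pow_const _)

lemma aemeasurable_denG (hα : ContinuousOn α (Icc 0 1)) (hv : ContinuousOn v (Icc 0 1)) :
    AEMeasurable (denG n cn p (Icc 0 1) α v) (volume.restrict (Icc 0 1)) :=
  (((hv.aemeasurable measurableSet_Icc).abs.pow_const p).mul
    (((continuous_Fvol n cn).comp_continuousOn hα).aemeasurable measurableSet_Icc)).mul
    (aemeasurable_gSpeedOn_Icc α 0 1)

lemma intervalIntegrable_numG_of_lintegral_ne_top (hα : ContinuousOn α (Icc 0 1))
    (hF : ∀ t ∈ Icc (0:ℝ) 1, 0 ≤ Fvol n cn (α t))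
    (h : ∫⁻ t in Ioc 0 1, ENNReal.ofReal (numG n cn p (Icc 0 1) α v t) ≠ ⊤) :
    IntervalIntegrable (numG n cn p (Icc 0 1) α v) volume 0 1 := by
  rw [intervalIntegrable_iff_integrableOn_Ioc_of_le zero_le_one]
  refine (lintegral_ofReal_ne_top_iff_integrable ?_ ?_).1 h
  · exact ((aemeasurable_numG hα v).mono_measure
      (Measure.restrict_mono Ioc_subset_Icc_self le_rfl)).aestronglyMeasurable
  · filter_upwards [ae_restrict_mem measurableSet_Ioc] with t ht
    exact numG_nonneg (hF t (Ioc_subset_Icc_self ht))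

lemma intervalIntegrable_denG (hp : 0 ≤ p) {K : ℝ≥0} (hα : LipschitzOnWith K α (Icc 0 1))
    (hv : ContinuousOn v (Icc 0 1)) :
    IntervalIntegrable (denG n cn p (Icc 0 1) α v) volume 0 1 := by
  rw [intervalIntegrable_iff_integrableOn_Icc_of_le zero_le_one]
  have hcont : ContinuousOn (fun t => |v t| ^ p * Fvol n cn (α t)) (Icc 0 1) :=
    (hv.abs.rpow_const fun _ _ => Or.inr hp).mul
      ((continuous_Fvol n cn).comp_continuousOn hα.continuousOn)
  obtain ⟨C, hC⟩ := isCompact_Icc.exists_bound_of_continuousOn hcont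
  refine ⟨(aemeasurable_denG hα.continuousOn hv).aestronglyMeasurable,
    HasFiniteIntegral.of_bounded (C := C * (2 * K)) ?_⟩
  filter_upwards [ae_restrict_Icc_mem_Ioo 0 1] with t ht
  rw [denG, norm_mul, Real.norm_of_nonneg (gSpeedOn_nonneg _ α t)]
  exact mul_le_mul (hC t (Ioo_subset_Icc_self ht)) (gSpeedOn_Icc_le hα ht)
    (gSpeedOn_nonneg _ α t) ((norm_nonneg _).trans (hC t (Ioo_subset_Icc_self ht)))

lemma integral_numG_nonneg (hF : ∀ t ∈ Icc (0:ℝ) 1, 0 ≤ Fvol n cn (α t)) (v : ℝ → ℝ) :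
    0 ≤ ∫ t in (0:ℝ)..1, numG n cn p s α v t :=
  intervalIntegral.integral_nonneg zero_le_one fun t ht => numG_nonneg (hF t ht)

lemma integral_denG_nonneg (hF : ∀ t ∈ Icc (0:ℝ) 1, 0 ≤ Fvol n cn (α t)) (v : ℝ → ℝ) :
    0 ≤ ∫ t in (0:ℝ)..1, denG n cn p s α v t :=
  intervalIntegral.integral_nonneg zero_le_one fun t ht => denG_nonneg (hF t ht)

lemma lambdaGOn_nonneg (hF : ∀ t ∈ Icc (0:ℝ) 1, 0 ≤ Fvol n cn (α t)) :
    0 ≤ lambdaGOn n cn p s α :=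
  Real.sInf_nonneg fun _ ⟨v, _, _, _, _, _, hq⟩ =>
    hq ▸ div_nonneg (integral_numG_nonneg hF v) (integral_denG_nonneg hF v)

lemma lambdaGOn_mul_integral_denG_le (hF : ∀ t ∈ Icc (0:ℝ) 1, 0 ≤ Fvol n cn (α t))
    {v : ℝ → ℝ} (hv : ∃ K, LipschitzOnWith K v (Icc 0 1))
    (hv0 : v 0 = 0) (hnum : IntervalIntegrable (numG n cn p s α v) volume 0 1)
    (hden : IntervalIntegrable (denG n cn p s α v) volume 0 1) :
    lambdaGOn n cn p s α * ∫ t in (0:ℝ)..1, denG n cn p s α v t ≤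
      ∫ t in (0:ℝ)..1, numG n cn p s α v t := by
  rcases (integral_denG_nonneg hF v).eq_or_lt with hD | hD
  · rw [← hD, mul_zero]
    exact integral_numG_nonneg hF v
  · rw [← le_div_iff₀ hD]
    refine csInf_le ⟨0, fun _ ⟨u, _, _, _, _, _, hq⟩ => ?_⟩ ⟨v, hv, hv0, hnum, hden, hD, rfl⟩
    exact hq ▸ div_nonneg (integral_numG_nonneg hF u) (integral_denG_nonneg hF u)

end Rayleigh

section Truncation

variable {n : ℕ} {cn p : ℝ} {s : Set ℝ} {α : ℝ → ℝ × ℝ} {w : ℝ → ℝ} {a : ℝ}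

lemma numG_truncate_le {t : ℝ} (hp : p ≠ 0) (hF : 0 ≤ Fvol n cn (α t)) (hta : t ≠ a) :
    numG n cn p s α (fun u => w (min u a)) t ≤ numG n cn p s α w t := by
  rcases hta.lt_or_gt with hlt | hgt
  · have hloc : (fun u => w (min u a)) =ᶠ[𝓝 t] w := by
      filter_upwards [Iio_mem_nhds hlt] with u hu
      rw [min_eq_left (le_of_lt hu)]
    rw [numG, numG, (hloc.filter_mono nhdsWithin_le_nhds).derivWithin_eq hloc.eq_of_nhds]
  · have hloc : (fun u => w (min u a)) =ᶠ[𝓝 t] fun _ => w a := by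
      filter_upwards [Ioi_mem_nhds hgt] with u hu
      rw [min_eq_right (le_of_lt hu)]
    rw [numG, (hloc.filter_mono nhdsWithin_le_nhds).derivWithin_eq hloc.eq_of_nhds,
      derivWithin_fun_const, Pi.zero_apply, abs_zero, Real.zero_rpow hp, zero_mul, zero_mul]
    exact numG_nonneg hF

lemma lintegral_numG_truncate_le (hp : p ≠ 0)
    (hF : ∀ t ∈ Icc (0:ℝ) 1, 0 ≤ Fvol n cn (α t)) :
    ∫⁻ t in Ioc 0 1, ENNReal.ofReal (numG n cn p s α (fun u => w (min u a)) t) ≤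
      ∫⁻ t in Ioc 0 1, ENNReal.ofReal (numG n cn p s α w t) := by
  refine lintegral_mono_ae ?_
  filter_upwards [ae_restrict_mem measurableSet_Ioc, ae_restrict_of_ae (volume.ae_ne a)]
    with t ht hta
  exact ENNReal.ofReal_le_ofReal (numG_truncate_le hp (hF t (Ioc_subset_Icc_self ht)) hta)

lemma setLIntegral_denG_le_truncate (ha : a ≤ 1) :
    ∫⁻ t in Ioc 0 a, ENNReal.ofReal (denG n cn p s α w t) ≤
      ∫⁻ t in Ioc 0 1, ENNReal.ofReal (denG n cn p s α (fun u => w (min u a)) t) :=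
  calc ∫⁻ t in Ioc 0 a, ENNReal.ofReal (denG n cn p s α w t)
      = ∫⁻ t in Ioc 0 a, ENNReal.ofReal (denG n cn p s α (fun u => w (min u a)) t) :=
        setLIntegral_congr_fun measurableSet_Ioc fun t ht => by
          simp only [denG, min_eq_left ht.2]
    _ ≤ _ := lintegral_mono_set (Ioc_subset_Ioc_right ha)

lemma ofReal_lambdaG_mul_setLIntegral_denG_le {K Kw : ℝ≥0} (hp : 0 < p)
    (hα : LipschitzOnWith K α (Icc 0 1)) (hF : ∀ t ∈ Icc (0:ℝ) 1, 0 ≤ Fvol n cn (α t))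
    (ha0 : 0 ≤ a) (ha1 : a ≤ 1) (hw : LipschitzOnWith Kw w (Icc 0 a)) (hw0 : w 0 = 0)
    (hN : ∫⁻ t in Ioc 0 1, ENNReal.ofReal (numG n cn p (Icc 0 1) α w t) ≠ ⊤) :
    ENNReal.ofReal (lambdaG n cn p α) *
        ∫⁻ t in Ioc 0 a, ENNReal.ofReal (denG n cn p (Icc 0 1) α w t) ≤
      ∫⁻ t in Ioc 0 1, ENNReal.ofReal (numG n cn p (Icc 0 1) α w t) := by
  set wa : ℝ → ℝ := fun u => w (min u a)
  have hwa : LipschitzOnWith Kw wa (Icc 0 1) :=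
    (hw.comp_min_const ha0).mono Icc_subset_Ici_self
  have hNa : ∫⁻ t in Ioc 0 1, ENNReal.ofReal (numG n cn p (Icc 0 1) α wa t) ≤ _ :=
    lintegral_numG_truncate_le hp.ne' hF
  have hnum : IntervalIntegrable (numG n cn p (Icc 0 1) α wa) volume 0 1 :=
    intervalIntegrable_numG_of_lintegral_ne_top hα.continuousOn hF
      (ne_top_of_le_ne_top hN hNa)
  have hden : IntervalIntegrable (denG n cn p (Icc 0 1) α wa) volume 0 1 :=
    intervalIntegrable_denG hp.le hα hwa.continuousOn
  calc _ ≤ ENNReal.ofReal (lambdaG n cn p α) *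
        ∫⁻ t in Ioc 0 1, ENNReal.ofReal (denG n cn p (Icc 0 1) α wa t) :=
        mul_le_mul_of_nonneg_left (setLIntegral_denG_le_truncate ha1) zero_le
    _ ≤ ∫⁻ t in Ioc 0 1, ENNReal.ofReal (numG n cn p (Icc 0 1) α wa t) := by
        rw [lambdaG,
          setLIntegral_Ioc_ofReal_eq zero_le_one hden fun t ht => denG_nonneg (hF t ht),
          setLIntegral_Ioc_ofReal_eq zero_le_one hnum fun t ht => numG_nonneg (hF t ht),
          ← ENNReal.ofReal_mul (lambdaGOn_nonneg hF)]
        exact ENNReal.ofReal_le_ofReal (lambdaGOn_mul_integral_denG_le hF ⟨Kw, hwa⟩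
          (by simp [wa, min_eq_left ha0, hw0]) hnum hden)
    _ ≤ _ := hNa

end Truncation

theorem simons_stmt13_general (n : ℕ) (cn : ℝ) (hcn : 0 < cn)
    (x0 y0 : ℝ)
    (α : ℝ → ℝ × ℝ) (hα : MemRg x0 y0 α)
    (w : ℝ → ℝ) (hw : ∀ a ∈ Ico (0:ℝ) 1, ∃ K, LipschitzOnWith K w (Icc 0 a))
    (hw0 : w 0 = 0) (p : ℝ) (hp : 2 ≤ p) :
    ENNReal.ofReal (lambdaG n cn p α) *
        (∫⁻ t in Ioc (0:ℝ) 1, ENNReal.ofReal (denG n cn p (Icc 0 1) α w t)) ≤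
      ∫⁻ t in Ioc (0:ℝ) 1, ENNReal.ofReal (numG n cn p (Icc 0 1) α w t) := by
  by_cases hN : ∫⁻ t in Ioc (0:ℝ) 1, ENNReal.ofReal (numG n cn p (Icc 0 1) α w t) = ⊤
  · exact hN ▸ le_top
  obtain ⟨K, hK⟩ := hα.1
  have hF : ∀ t ∈ Icc (0:ℝ) 1, 0 ≤ Fvol n cn (α t) := fun t ht =>
    Fvol_nonneg hcn.le (hα.mapsTo_Pset ht)
  rw [setLIntegral_Ioc_eq_iSup _ zero_lt_one, ENNReal.mul_iSup]
  refine iSup_le fun ⟨a, ha⟩ => ?_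
  obtain ⟨Kw, hKw⟩ := hw a (Ioo_subset_Ico_self ha)
  exact ofReal_lambdaG_mul_setLIntegral_denG_le (by linarith) hK hF ha.1.le ha.2.le hKw hw0
    hN

/-- For `α ∈ R_g` and any locally Lipschitz `w` on `[0,1)`
with `w(0) = 0` and finite denominator `∫₀¹ |w|^p F_α |α'|_g dt < ∞`, the
Rayleigh quotient of `w` bounds `λ_{1,p}(α)` from above (stated multiplicatively
in `ℝ≥0∞` to account for a possibly infinite numerator). -/
theorem simons_stmt13 (n : ℕ) (hn : 2 ≤ n) (cn : ℝ) (hcn : 0 < cn)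
    (x0 y0 : ℝ) (hy0 : 0 < y0) (hxy : y0 ≤ x0)
    (α : ℝ → ℝ × ℝ) (hα : MemRg x0 y0 α)
    (w : ℝ → ℝ) (hw : ∀ a ∈ Ico (0:ℝ) 1, ∃ K, LipschitzOnWith K w (Icc 0 a))
    (hw0 : w 0 = 0) (p : ℝ) (hp : 2 ≤ p)
    (hden : (∫⁻ t in Ioc (0:ℝ) 1,
      ENNReal.ofReal (denG n cn p (Icc 0 1) α w t)) < ⊤) :
    ENNReal.ofReal (lambdaG n cn p α) *
        (∫⁻ t in Ioc (0:ℝ) 1, ENNReal.ofReal (denG n cn p (Icc 0 1) α w t)) ≤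
      ∫⁻ t in Ioc (0:ℝ) 1, ENNReal.ofReal (numG n cn p (Icc 0 1) α w t) :=
  simons_stmt13_general n cn hcn x0 y0 α hα w hw hw0 p hp
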